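/- arXiv:1203.1592 — 3 statements merged into one kernel-verified Lean document; each statement's English description precedes it below -/
import Mathlib

section
/- For every n ≥ 1 and every φ₀ > 0 there exists φ₁ > 0 with the following property: for every N and every φ₀-thick n-simplex σ in EuclideanSpace ℝ (Fin N), given by affinely independent vertices σ₀,…,σ_n, and every strictly increasing chain of nonempty index sets S₀ ⊊ S₁ ⊊ ⋯ ⊊ S_n = {0,…,n}, the points w_j := centroid of {σ_i : i ∈ S_j} (j = 0,…,n) are affinely independent, and the n-simplex with vertices w₀,…,w_n is φ₁-thick. (In particular every simplex of the first barycentric subdivision of a thick simplex is thick.) -/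
/-!
Let `r` be the distance from the barycenter of `σ` to its boundary. Walking from the barycenter
along the affine hull until some barycentric coordinate vanishes reaches the boundary, so the
barycentric coordinates are Lipschitz: `(n + 1) r |u i - u' i| ≤ ‖x - x'‖`.

Pick `i_j ∈ S_j \ S_{j-1}`; the coordinate of `w_k` at `i_j` is then `[j ≤ k] / |S_k|`. Hence
the facet opposite `w_j` lies in the hyperplane where the coordinates at `i_j` and `i_{j+1}`
agree (where the coordinate at `i_n` vanishes, if `j = n`), whereas at the barycenter of the
`w_k` they differ by `1 / ((n + 1) |S_j|) ≥ 1 / (n + 1)²`. So the new barycenter is at distance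
at least `r / (2 (n + 1))` from every facet; this forces affine independence, and as the new
simplex lies inside `σ`, its thickness is at least `φ₀ / (2 (n + 1))`.
-/

open Metric Finset

/-- The thickness (fatness) of the simplex with vertices `σ 0, …, σ n`:
the distance from the barycenter to the boundary (the union of the convex
hulls of the facets, i.e. of the sets of all vertices but one), divided by
the diameter of the simplex. -/
noncomputable def simplexThickness {E : Type*} [NormedAddCommGroup E]
    [InnerProductSpace ℝ E] {n : ℕ} (σ : Fin (n + 1) → E) : ℝ :=
  Metric.infDist ((Finset.univ : Finset (Fin (n + 1))).centroid ℝ σ)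
      (⋃ i : Fin (n + 1), convexHull ℝ (σ '' {i}ᶜ)) /
    Metric.diam (convexHull ℝ (Set.range σ))

def simplexBoundary {E ι : Type*} [AddCommGroup E] [Module ℝ E] (σ : ι → E) : Set E :=
  ⋃ i, convexHull ℝ (σ '' {i}ᶜ)

theorem exists_segment_exit_nonneg {ι : Type*} [Fintype ι] {a u : ι → ℝ} (ha : ∀ i, 0 < a i)
    {i₀ : ι} (hu : u i₀ ≤ 0) :
    ∃ t ∈ Set.Ioc (0 : ℝ) 1,
      (∀ i, 0 ≤ a i + t * (u i - a i)) ∧ ∃ i, a i + t * (u i - a i) = 0 := by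
  classical
  set I := univ.filter fun i => u i ≤ 0
  have hgap : ∀ i ∈ I, a i ≤ a i - u i := fun i hi => by linarith [(mem_filter.1 hi).2]
  obtain ⟨i₁, hi₁, hmin⟩ := I.exists_min_image (fun i => a i / (a i - u i))
    ⟨i₀, mem_filter.2 ⟨mem_univ _, hu⟩⟩
  have hpos₁ : 0 < a i₁ - u i₁ := (ha i₁).trans_le (hgap i₁ hi₁)
  have ht0 : 0 < a i₁ / (a i₁ - u i₁) := div_pos (ha i₁) hpos₁
  have ht1 : a i₁ / (a i₁ - u i₁) ≤ 1 := (div_le_one hpos₁).2 (hgap i₁ hi₁)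
  refine ⟨a i₁ / (a i₁ - u i₁), ⟨ht0, ht1⟩, fun i => ?_, i₁, by field_simp; ring⟩
  by_cases hi : u i ≤ 0
  · have hiI : i ∈ I := mem_filter.2 ⟨mem_univ _, hi⟩
    have hti := hmin i hiI
    rw [le_div_iff₀ ((ha i).trans_le (hgap i hiI))] at hti
    linarith
  · nlinarith [ha i]

section Affine

variable {E ι : Type*} [AddCommGroup E] [Module ℝ E]

theorem Finset.univ_centroid_eq_sum_smul [Fintype ι] [Nonempty ι] (p : ι → E) :
    univ.centroid ℝ p = ∑ i, (Fintype.card ι : ℝ)⁻¹ • p i := by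
  rw [centroid_def, affineCombination_eq_linear_combination _ _ _
    (sum_centroidWeights_eq_one_of_nonempty ℝ _ univ_nonempty)]
  simp [centroidWeights_apply]

theorem Finset.centroid_eq_linearCombination [Fintype ι] (σ : ι → E) {s : Finset ι}
    (hs : s.Nonempty) :
    s.centroid ℝ σ = Fintype.linearCombination ℝ σ (s.centroidWeightsIndicator ℝ) := by
  rw [centroid_eq_affineCombination_fintype, affineCombination_eq_linear_combination _ _ _
    (sum_centroidWeightsIndicator_eq_one_of_nonempty ℝ s hs)]
  rfl

theorem Finset.centroid_mem_convexHull_range (σ : ι → E) {s : Finset ι} (hs : s.Nonempty) :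
    s.centroid ℝ σ ∈ convexHull ℝ (Set.range σ) :=
  affineCombination_mem_convexHull (fun _ _ => by simp [centroidWeights_apply])
    (s.sum_centroidWeights_eq_one_of_nonempty ℝ hs)

theorem simplexBoundary_nonempty [Nontrivial ι] (σ : ι → E) :
    (simplexBoundary σ).Nonempty := by
  obtain ⟨i, j, hij⟩ := exists_pair_ne ι
  exact ⟨σ j, Set.mem_iUnion.2 ⟨i, subset_convexHull ℝ _ ⟨j, hij.symm, rfl⟩⟩⟩

theorem linearCombination_mem_convexHull_image_compl [Fintype ι] (σ : ι → E) {z : ι → ℝ}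
    (hz : z ∈ stdSimplex ℝ ι) {i : ι} (hzi : z i = 0) :
    Fintype.linearCombination ℝ σ z ∈ convexHull ℝ (σ '' {i}ᶜ) := by
  classical
  rw [Fintype.linearCombination_apply, ← sum_erase (a := i) _ (by simp [hzi])]
  refine (convex_convexHull ℝ _).sum_mem (fun j _ => hz.1 j) ?_
    fun j hj => subset_convexHull ℝ _ ⟨j, ne_of_mem_erase hj, rfl⟩
  rw [sum_erase _ hzi, hz.2]

theorem exists_weight_diff_of_mem_convexHull_image_compl {κ : Type*} [Fintype ι] [Fintype κ]
    (L : (ι → ℝ) →ₗ[ℝ] E) {v : κ → ι → ℝ} (hv : ∀ k, ∑ i, v k i = 1) (G : (ι → ℝ) →ₗ[ℝ] ℝ)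
    {j : κ} (hG : ∀ k ≠ j, G (v k) = 0)
    {y : E} (hy : y ∈ convexHull ℝ ((L ∘ v) '' {j}ᶜ)) :
    ∃ δ : ι → ℝ, ∑ i, δ i = 0 ∧ G δ = (Fintype.card κ : ℝ)⁻¹ * G (v j) ∧
      L δ = univ.centroid ℝ (L ∘ v) - y := by
  have : Nonempty κ := ⟨j⟩
  rw [Set.image_comp, ← LinearMap.image_convexHull] at hy
  obtain ⟨u, hu, rfl⟩ := hy
  have hsum : IsLinearMap ℝ fun u : ι → ℝ => ∑ i, u i :=
    ⟨fun _ _ => sum_add_distrib, fun _ _ => (mul_sum _ _ _).symm⟩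
  obtain ⟨hu1, hGu⟩ : ∑ i, u i = 1 ∧ G u = 0 :=
    convexHull_min (by rintro _ ⟨k, hk, rfl⟩; exact ⟨hv k, hG k hk⟩)
      ((convex_hyperplane hsum 1).inter (convex_hyperplane G.isLinear 0)) hu
  refine ⟨∑ k, (Fintype.card κ : ℝ)⁻¹ • v k - u, ?_, ?_, ?_⟩
  · simp [Finset.sum_apply, sum_comm (γ := ι), ← mul_sum, hv, hu1]
  · rw [map_sub, map_sum, hGu, sub_zero, sum_eq_single j (fun k _ hk => by simp [hG k hk])
      (by simp), map_smul, smul_eq_mul]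
  · rw [univ_centroid_eq_sum_smul (L ∘ v), map_sub, map_sum]
    simp

end Affine

section Chain

variable {ι : Type*} {m : ℕ} {S : Fin (m + 1) → Finset ι}

theorem exists_mem_iff_le_of_strictMono (hS : StrictMono S) (h0 : (S 0).Nonempty)
    (j : Fin (m + 1)) : ∃ i, ∀ k, i ∈ S k ↔ j ≤ k := by
  induction j using Fin.cases with
  | zero =>
    obtain ⟨i, hi⟩ := h0
    exact ⟨i, fun k => ⟨fun _ => Fin.zero_le k, fun hk => hS.monotone hk hi⟩⟩
  | succ j =>
    obtain ⟨i, hi, hi'⟩ := exists_of_ssubset (hS j.castSucc_lt_succ)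
    refine ⟨i, fun k => ⟨fun hik => ?_, fun hk => hS.monotone hk hi⟩⟩
    by_contra hk
    exact hi' (hS.monotone (Fin.le_castSucc_iff.2 (not_le.1 hk)) hik)

variable [Fintype ι]

theorem exists_linearMap_centroidWeightsIndicator_eq_ite (hS : StrictMono S)
    (h0 : (S 0).Nonempty) (j : Fin (m + 1)) :
    ∃ G : (ι → ℝ) →ₗ[ℝ] ℝ, (∀ δ : ι → ℝ, |G δ| ≤ 2 * ‖δ‖) ∧
      ∀ k, G ((S k).centroidWeightsIndicator ℝ) =
        if k = j then ((S j).card : ℝ)⁻¹ else 0 := by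
  classical
  choose p hp using exists_mem_iff_le_of_strictMono hS h0
  have hv : ∀ k l, (S k).centroidWeightsIndicator ℝ (p l) =
      if l ≤ k then ((S k).card : ℝ)⁻¹ else 0 := fun k l => by
    simp only [centroidWeightsIndicator_def, Set.indicator_apply, mem_coe, hp,
      centroidWeights_apply]
  induction j using Fin.lastCases with
  | last =>
    refine ⟨LinearMap.proj (p (Fin.last m)), fun δ => ?_, fun k => ?_⟩
    · have := norm_le_pi_norm δ (p (Fin.last m))
      rw [Real.norm_eq_abs] at this
      simp only [LinearMap.proj_apply]
      linarith [norm_nonneg δ]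
    · simp only [LinearMap.proj_apply, hv, Fin.last_le_iff]
      split_ifs with h <;> simp [h]
  | cast j =>
    refine ⟨LinearMap.proj (R := ℝ) (φ := fun _ => ℝ) (p j.castSucc) -
      LinearMap.proj (p j.succ), fun δ => ?_, fun k => ?_⟩
    · have h1 := norm_le_pi_norm δ (p j.castSucc)
      have h2 := norm_le_pi_norm δ (p j.succ)
      rw [Real.norm_eq_abs] at h1 h2
      simp only [LinearMap.sub_apply, LinearMap.proj_apply]
      linarith [abs_sub (δ (p j.castSucc)) (δ (p j.succ))]
    · simp only [LinearMap.sub_apply, LinearMap.proj_apply, hv, ← Fin.castSucc_lt_iff_succ_le]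
      rcases lt_trichotomy k j.castSucc with h | rfl | h
      · simp [not_le.2 h, not_lt.2 h.le, h.ne]
      · simp
      · simp [h, h.le, h.ne']

end Chain

section Normed

variable {E ι : Type*} [NormedAddCommGroup E] [NormedSpace ℝ E] [Fintype ι]

theorem infDist_centroid_le_diam (σ : ι → E) :
    infDist (univ.centroid ℝ σ) (simplexBoundary σ) ≤ diam (convexHull ℝ (Set.range σ)) := by
  rcases (simplexBoundary σ).eq_empty_or_nonempty with h | ⟨y, hy⟩
  · rw [h, infDist_empty]
    exact diam_nonneg
  obtain ⟨i, hy⟩ := Set.mem_iUnion.1 hy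
  exact (infDist_le_dist_of_mem (Set.mem_iUnion.2 ⟨i, hy⟩)).trans <|
    dist_le_diam_of_mem (isBounded_convexHull.2 (Set.finite_range σ).isBounded)
      (univ.centroid_mem_convexHull_range σ ⟨i, mem_univ i⟩)
      (convexHull_mono (Set.image_subset_range _ _) hy)

theorem exists_mem_simplexBoundary_dist_centroid_le (σ : ι → E) {u : ι → ℝ}
    (hu : ∑ i, u i = 1) {i₀ : ι} (hi₀ : u i₀ ≤ 0) :
    ∃ x ∈ simplexBoundary σ, dist (univ.centroid ℝ σ) x ≤
      dist (univ.centroid ℝ σ) (Fintype.linearCombination ℝ σ u) := by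
  have : Nonempty ι := ⟨i₀⟩
  set L := Fintype.linearCombination ℝ σ
  set a : ι → ℝ := fun _ => (Fintype.card ι : ℝ)⁻¹
  have ha : ∑ i, a i = 1 := by simp [a]
  have hb : univ.centroid ℝ σ = L a := Finset.univ_centroid_eq_sum_smul σ
  obtain ⟨t, ⟨ht0, ht1⟩, hz0, i, hzi⟩ :=
    exists_segment_exit_nonneg (a := a) (fun _ => by positivity) hi₀
  have hz : a + t • (u - a) ∈ stdSimplex ℝ ι :=
    ⟨hz0, by simp [sum_add_distrib, ← mul_sum, hu, ha]⟩
  refine ⟨L (a + t • (u - a)), Set.mem_iUnion.2 ⟨i, ?_⟩, ?_⟩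
  · exact linearCombination_mem_convexHull_image_compl σ hz hzi
  rw [hb, dist_eq_norm', dist_eq_norm', map_add, add_sub_cancel_left, map_smul, norm_smul,
    Real.norm_of_nonneg ht0.le, map_sub]
  exact mul_le_of_le_one_left (norm_nonneg _) ht1

theorem card_mul_infDist_mul_abs_le (σ : ι → E) {δ : ι → ℝ} (hδ : ∑ i, δ i = 0) (i : ι) :
    Fintype.card ι * infDist (univ.centroid ℝ σ) (simplexBoundary σ) * |δ i| ≤
      ‖Fintype.linearCombination ℝ σ δ‖ := by
  rcases eq_or_ne (δ i) 0 with h | h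
  · simp [h]
  have : Nonempty ι := ⟨i⟩
  set L := Fintype.linearCombination ℝ σ
  set c : ℝ := (Fintype.card ι : ℝ)⁻¹
  have hc : 0 < c := by positivity
  set u : ι → ℝ := (fun _ => c) - (c / δ i) • δ
  obtain ⟨x, hx, hxu⟩ := exists_mem_simplexBoundary_dist_centroid_le σ (u := u)
    (by simp [u, c, ← mul_sum, hδ]) (i₀ := i) (by simp [u, h])
  have hu : dist (univ.centroid ℝ σ) (L u) = c / |δ i| * ‖L δ‖ := by
    rw [Finset.univ_centroid_eq_sum_smul σ, ← Fintype.linearCombination_apply, map_sub,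
      dist_self_sub_right, map_smul, norm_smul, norm_div, Real.norm_of_nonneg hc.le,
      Real.norm_eq_abs]
  calc Fintype.card ι * infDist (univ.centroid ℝ σ) (simplexBoundary σ) * |δ i|
      ≤ Fintype.card ι * (c / |δ i| * ‖L δ‖) * |δ i| := by
        gcongr
        exact (infDist_le_dist_of_mem hx).trans (hxu.trans_eq hu)
    _ = ‖L δ‖ := by
        simp only [c]
        field_simp

theorem card_mul_infDist_mul_norm_le (σ : ι → E) {δ : ι → ℝ} (hδ : ∑ i, δ i = 0) :
    Fintype.card ι * infDist (univ.centroid ℝ σ) (simplexBoundary σ) * ‖δ‖ ≤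
      ‖Fintype.linearCombination ℝ σ δ‖ := by
  set c := Fintype.card ι * infDist (univ.centroid ℝ σ) (simplexBoundary σ)
  have hc0 : 0 ≤ c := mul_nonneg (Nat.cast_nonneg _) infDist_nonneg
  rcases hc0.eq_or_lt with hc | hc
  · rw [← hc, zero_mul]
    exact norm_nonneg _
  rw [← le_div_iff₀' hc, pi_norm_le_iff_of_nonneg (by positivity)]
  intro i
  rw [Real.norm_eq_abs, le_div_iff₀' hc]
  exact card_mul_infDist_mul_abs_le σ hδ i

theorem affineIndependent_of_infDist_centroid_pos (σ : ι → E)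
    (h : 0 < infDist (univ.centroid ℝ σ) (simplexBoundary σ)) : AffineIndependent ℝ σ := by
  rw [affineIndependent_iff_of_fintype]
  intro δ hδ hδσ i
  have : Nonempty ι := ⟨i⟩
  have hi := card_mul_infDist_mul_abs_le σ hδ i
  rw [Fintype.linearCombination_apply, ← weightedVSub_eq_linear_combination _ hδ, hδσ,
    norm_zero] at hi
  have : 0 < (Fintype.card ι : ℝ) * infDist (univ.centroid ℝ σ) (simplexBoundary σ) := by
    positivity
  exact abs_nonpos_iff.1 (nonpos_of_mul_nonpos_right hi this)

theorem div_le_dist_centroid_of_mem_simplexBoundary (σ : ι → E) {m : ℕ}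
    {S : Fin (m + 1) → Finset ι} (hS : StrictMono S) (h0 : (S 0).Nonempty) {y : E}
    (hy : y ∈ simplexBoundary fun k => (S k).centroid ℝ σ) :
    infDist (univ.centroid ℝ σ) (simplexBoundary σ) / (2 * (m + 1)) ≤
      dist (univ.centroid ℝ fun k => (S k).centroid ℝ σ) y := by
  obtain ⟨j, hy⟩ := Set.mem_iUnion.1 hy
  set L := Fintype.linearCombination ℝ σ
  set v := fun k => (S k).centroidWeightsIndicator ℝ
  have hne : ∀ k, (S k).Nonempty := fun k => h0.mono (hS.monotone (Fin.zero_le k))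
  have hw : (fun k => (S k).centroid ℝ σ) = L ∘ v :=
    funext fun k => centroid_eq_linearCombination σ (hne k)
  obtain ⟨G, hG, hGv⟩ := exists_linearMap_centroidWeightsIndicator_eq_ite hS h0 j
  obtain ⟨δ, hδ, hGδ, hLδ⟩ := exists_weight_diff_of_mem_convexHull_image_compl L
    (fun k => sum_centroidWeightsIndicator_eq_one_of_nonempty ℝ _ (hne k)) G
    (fun k hk => by simp [hGv, hk]) (hw ▸ hy)
  have hcard : ((S j).card : ℝ) ≤ Fintype.card ι := by exact_mod_cast card_le_univ _
  have hpos : (0 : ℝ) < (S j).card := by exact_mod_cast (hne j).card_pos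
  rw [hGv, if_pos rfl, Fintype.card_fin] at hGδ
  have hB := card_mul_infDist_mul_norm_le σ hδ
  rw [hLδ, ← hw, ← dist_eq_norm] at hB
  set r := infDist (univ.centroid ℝ σ) (simplexBoundary σ)
  have hr : 0 ≤ r := infDist_nonneg
  calc r / (2 * (m + 1))
      = Fintype.card ι * r * ((((m : ℝ) + 1) * Fintype.card ι)⁻¹ / 2) := by
        have : (0 : ℝ) < Fintype.card ι := hpos.trans_le hcard
        field_simp
    _ ≤ Fintype.card ι * r * (G δ / 2) := by
        rw [hGδ]
        gcongr
        rw [Nat.cast_succ, ← mul_inv]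
        gcongr
    _ ≤ Fintype.card ι * r * ‖δ‖ := by
        gcongr
        linarith [le_abs_self (G δ), hG δ]
    _ ≤ _ := hB

end Normed

theorem div_le_simplexThickness {E : Type*} [NormedAddCommGroup E] [InnerProductSpace ℝ E]
    {n : ℕ} (σ : Fin (n + 1) → E) {ρ D : ℝ} (hρ : 0 < ρ)
    (hρσ : ρ ≤ infDist (univ.centroid ℝ σ) (simplexBoundary σ))
    (hD : diam (convexHull ℝ (Set.range σ)) ≤ D) :
    ρ / D ≤ simplexThickness σ := by
  have hdiam := hρ.trans_le (hρσ.trans (infDist_centroid_le_diam σ))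
  calc ρ / D ≤ ρ / diam (convexHull ℝ (Set.range σ)) :=
        div_le_div_of_nonneg_left hρ.le hdiam hD
    _ ≤ simplexThickness σ := by
      unfold simplexThickness
      gcongr
      exact hρσ

/-- Every simplex of the first barycentric subdivision of a thick simplex is
thick, with a thickness bound depending only on the dimension and the original
thickness bound. -/
theorem barycentric_subdivision_thick :
    ∀ n : ℕ, 1 ≤ n → ∀ φ₀ : ℝ, 0 < φ₀ → ∃ φ₁ : ℝ, 0 < φ₁ ∧
      ∀ (N : ℕ) (σ : Fin (n + 1) → EuclideanSpace ℝ (Fin N)),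
        AffineIndependent ℝ σ → φ₀ ≤ simplexThickness σ →
        ∀ S : Fin (n + 1) → Finset (Fin (n + 1)),
          (∀ j, (S j).Nonempty) →
          (∀ j k : Fin (n + 1), j < k → S j ⊂ S k) →
          S (Fin.last n) = Finset.univ →
          AffineIndependent ℝ (fun j => (S j).centroid ℝ σ) ∧
            φ₁ ≤ simplexThickness (fun j => (S j).centroid ℝ σ) := by
  intro n hn φ₀ hφ₀
  refine ⟨φ₀ / (2 * (n + 1)), by positivity, fun N σ _ hσ S hS hSS _ => ?_⟩
  have : Nontrivial (Fin (n + 1)) := Fin.nontrivial_iff_two_le.2 (by omega)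
  set w := fun j => (S j).centroid ℝ σ
  set r := infDist (univ.centroid ℝ σ) (simplexBoundary σ)
  set d := diam (convexHull ℝ (Set.range σ))
  obtain ⟨hr, hd⟩ : 0 < r ∧ 0 < d :=
    (div_pos_iff.1 (hφ₀.trans_le hσ)).resolve_right fun h => h.2.not_ge diam_nonneg
  have hw : r / (2 * (n + 1)) ≤ infDist (univ.centroid ℝ w) (simplexBoundary w) :=
    (le_infDist (simplexBoundary_nonempty w)).2 fun y hy =>
      div_le_dist_centroid_of_mem_simplexBoundary σ hSS (hS 0) hy
  have hdiam : diam (convexHull ℝ (Set.range w)) ≤ d :=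
    diam_mono (convexHull_min
      (Set.range_subset_iff.2 fun k => centroid_mem_convexHull_range σ (hS k))
      (convex_convexHull ℝ _)) (isBounded_convexHull.2 (Set.finite_range σ).isBounded)
  have hρ : 0 < r / (2 * (n + 1)) := by positivity
  refine ⟨affineIndependent_of_infDist_centroid_pos w (hρ.trans_le hw), ?_⟩
  calc φ₀ / (2 * (n + 1)) ≤ r / d / (2 * (n + 1)) := by gcongr; exact hσ
    _ = r / (2 * (n + 1)) / d := by ring
    _ ≤ simplexThickness w := div_le_simplexThickness w hρ hw hdiam
end

section
/- Let V be a real inner product space of finite dimension 3 (for instance EuclideanSpace ℝ (Fin 3)) and let v₀, v₁, v₂, v₃ be nonzero vectors in V. Then the 4×4 real matrix whose (i,j) entry is cos (angle (v_i) (v_j)) has determinant zero. In particular, for four points lying on the sphere of radius R = 1/√κ centered at the origin in ℝ³, with pairwise geodesic distances d_ij (so that √κ·d_ij is the angle between the corresponding position vectors), one has det(cos(√κ·d_ij)) = 0. -/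
/-!
The cosine matrix is the Gram matrix of the normalized vectors `‖vᵢ‖⁻¹ • vᵢ`. Four vectors in a
three-dimensional space are linearly dependent, and the Gram matrix of a linearly dependent family
is singular.
-/

open InnerProductGeometry RealInnerProductSpace

theorem Matrix.det_gram_eq_zero_of_finrank_lt {𝕜 E n : Type*} [RCLike 𝕜] [NormedAddCommGroup E]
    [InnerProductSpace 𝕜 E] [FiniteDimensional 𝕜 E] [Fintype n] [DecidableEq n] (v : n → E)
    (h : Module.finrank 𝕜 E < Fintype.card n) : (Matrix.gram 𝕜 v).det = 0 := by
  by_contra hdet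
  exact h.not_ge (Matrix.det_gram_ne_zero_iff_linearIndependent.mp hdet).fintype_card_le_finrank

theorem InnerProductGeometry.cos_angle_eq_inner_normalize {V : Type*} [NormedAddCommGroup V]
    [InnerProductSpace ℝ V] (x y : V) :
    Real.cos (angle x y) = ⟪NormedSpace.normalize x, NormedSpace.normalize y⟫ := by
  rw [cos_angle, NormedSpace.normalize, NormedSpace.normalize, real_inner_smul_left,
    real_inner_smul_right]
  field_simp

theorem det_cos_angle_eq_zero_general {V : Type*} [NormedAddCommGroup V]
    [InnerProductSpace ℝ V] (hdim : Module.finrank ℝ V = 3)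
    (v : Fin 4 → V) :
    (Matrix.of fun i j : Fin 4 => Real.cos (angle (v i) (v j))).det = 0 := by
  have : FiniteDimensional ℝ V := Module.finite_of_finrank_eq_succ hdim
  have hgram : (Matrix.of fun i j : Fin 4 => Real.cos (angle (v i) (v j))) =
      Matrix.gram ℝ (NormedSpace.normalize ∘ v) := by
    ext i j
    exact cos_angle_eq_inner_normalize (v i) (v j)
  rw [hgram]
  exact Matrix.det_gram_eq_zero_of_finrank_lt _ (by simp [hdim])

/-- For four nonzero vectors in a 3-dimensional real inner product space, the
4×4 matrix of cosines of their pairwise angles has determinant zero. In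
particular, for four points on the sphere of radius `1/√κ` in `ℝ³` with
pairwise geodesic distances `d i j` (so that `√κ · d i j` is the angle between
the position vectors), one has `det (cos (√κ · d i j)) = 0`. -/
theorem det_cos_angle_eq_zero {V : Type*} [NormedAddCommGroup V]
    [InnerProductSpace ℝ V] (hdim : Module.finrank ℝ V = 3)
    (v : Fin 4 → V) (hv : ∀ i, v i ≠ 0) :
    (Matrix.of fun i j : Fin 4 => Real.cos (angle (v i) (v j))).det = 0 :=
  det_cos_angle_eq_zero_general hdim v
end

section
/- Let z₀, z₁, z₂, z₃ be four points of the hyperbolic upper half-plane (Mathlib's UpperHalfPlane with its hyperbolic distance of constant curvature −1). Then the 4×4 real matrix whose (i,j) entry is cosh (dist z_i z_j) has determinant zero. (This is the necessity of the vanishing-determinant condition det(cosh(√(−κ)·d_ij)) = 0 for a metric quadruple isometrically embedded in the hyperbolic plane of curvature κ = −1.) -/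
/-!
Send `z = x + iy` to the point `((1 + |z|²) / 2y, (|z|² - 1) / 2y, x / y)` of the hyperboloid model.
Then `cosh (dist z w)` is the Minkowski product of the images of `z` and `w`, so the matrix of
hyperbolic cosines of four points is the Gram matrix of four vectors in `ℝ³` and is singular.
-/

open Matrix

theorem Matrix.det_mul_eq_zero_of_card_lt {K m n : Type*} [Field K] [Fintype m] [Fintype n]
    [DecidableEq n] (A : Matrix n m K) (B : Matrix m n K)
    (h : Fintype.card m < Fintype.card n) : (A * B).det = 0 := by
  by_contra hdet
  have hunit : IsUnit (A * B) := (isUnit_iff_isUnit_det _).2 (isUnit_iff_ne_zero.2 hdet)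
  have hrank : (A * B).rank ≤ Fintype.card m := (rank_mul_le_right A B).trans B.rank_le_card_height
  rw [rank_of_isUnit _ hunit] at hrank
  omega

theorem Matrix.det_gram_eq_zero_of_card_lt {K m n : Type*} [Field K] [Fintype m] [Fintype n]
    [DecidableEq n] (Q : Matrix m m K) (v : n → m → K) (h : Fintype.card m < Fintype.card n) :
    (Matrix.of fun i j => v i ⬝ᵥ Q *ᵥ v j).det = 0 := by
  convert det_mul_eq_zero_of_card_lt (of v) (Q * (of v)ᵀ) h using 2
  ext i j
  simp [mul_apply, dotProduct, mulVec, Finset.mul_sum, mul_left_comm]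

namespace UpperHalfPlane

noncomputable def toHyperboloid (z : ℍ) : Fin 3 → ℝ :=
  ![(1 + Complex.normSq z) / (2 * z.im), (Complex.normSq z - 1) / (2 * z.im), z.re / z.im]

def minkowskiForm : Matrix (Fin 3) (Fin 3) ℝ := diagonal ![1, -1, -1]

theorem cosh_dist_eq_minkowskiForm (z w : ℍ) :
    Real.cosh (dist z w) = toHyperboloid z ⬝ᵥ minkowskiForm *ᵥ toHyperboloid w := by
  have hz := z.im_pos.ne'
  have hw := w.im_pos.ne'
  rw [cosh_dist']
  simp only [toHyperboloid, minkowskiForm, mulVec_diagonal, dotProduct, Fin.sum_univ_three,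
    Complex.normSq_apply, coe_re, coe_im, cons_val_zero, cons_val_one, cons_val, one_mul, neg_mul,
    mul_neg]
  field_simp
  ring

end UpperHalfPlane

/-- For any four points of the hyperbolic upper half-plane (with its metric of
constant curvature `−1`), the 4×4 matrix with entries `cosh (dist z_i z_j)`
has determinant zero. -/
theorem det_cosh_dist_eq_zero (z : Fin 4 → UpperHalfPlane) :
    (Matrix.of fun i j : Fin 4 => Real.cosh (dist (z i) (z j))).det = 0 := by
  simp only [UpperHalfPlane.cosh_dist_eq_minkowskiForm]
  exact det_gram_eq_zero_of_card_lt _ (fun i => (z i).toHyperboloid) (by simp)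
end
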